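/- arXiv:1110.4838 — 8 statements merged into one kernel-verified Lean document; each statement's English description precedes it below -/
import Mathlib

section
/- Let X be a metric space, L ≥ 0, and γ : ℝ → X a map with dist(γ s, γ t) ≤ |s − t| for all s, t ∈ [0, L]. Let e ∈ X satisfy the minimality condition: for all s, t ∈ [0, L], |s − t| ≤ dist(γ s, e) + dist(e, γ t). Set a = min(dist(e, γ 0), L). Then a ∈ [0, L] and for every t ∈ [0, L], |a − t| ≤ dist(e, γ t). In other words, the point of the path at arc-length distance dist(e, γ 0) from the starting endpoint (truncated at the far endpoint) is a projection of e onto the path: it is at least as close, in path distance, to every point of the path as e is in the ambient metric. -/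
/-!
The parameter `dist e (γ 0)` is within `dist e (γ t)` of every `t`: from above by the triangle
inequality through `γ 0` and the Lipschitz bound `dist (γ 0) (γ t) ≤ t`, from below by minimality
with `s = 0`. Truncating at `L` only moves it towards `t ≤ L`.
-/

theorem abs_min_sub_le_abs_sub {α : Type*} [AddCommGroup α] [LinearOrder α]
    [IsOrderedAddMonoid α] {a b t : α} (ht : t ≤ b) : |min a b - t| ≤ |a - t| := by
  simpa [min_eq_left ht] using abs_min_sub_min_le_max a b t b

theorem abs_dist_sub_le_dist {X : Type*} [PseudoMetricSpace X] {x y e : X} {r : ℝ}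
    (hle : dist x y ≤ r) (hge : r ≤ dist x e + dist e y) : |dist e x - r| ≤ dist e y :=
  abs_sub_le_iff.2
    ⟨by linarith [dist_triangle e y x, dist_comm x y], by linarith [dist_comm x e]⟩

/-- Abstract form of Lemma 2: on a minimal path, the point at arc-length
distance `dist e (γ 0)` from the start (truncated at the far endpoint) is a
projection of the evader position `e` onto the path. -/
theorem projection_exists {X : Type*} [MetricSpace X] (L : ℝ) (hL : 0 ≤ L)
    (γ : ℝ → X)
    (hlip : ∀ s ∈ Set.Icc (0 : ℝ) L, ∀ t ∈ Set.Icc (0 : ℝ) L, dist (γ s) (γ t) ≤ |s - t|)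
    (e : X)
    (hmin : ∀ s ∈ Set.Icc (0 : ℝ) L, ∀ t ∈ Set.Icc (0 : ℝ) L,
      |s - t| ≤ dist (γ s) e + dist e (γ t)) :
    min (dist e (γ 0)) L ∈ Set.Icc (0 : ℝ) L ∧
      ∀ t ∈ Set.Icc (0 : ℝ) L, |min (dist e (γ 0)) L - t| ≤ dist e (γ t) := by
  refine ⟨⟨le_min dist_nonneg hL, min_le_right _ _⟩, fun t ht => ?_⟩
  have h0 : (0 : ℝ) ∈ Set.Icc 0 L := ⟨le_rfl, hL⟩
  have hlip₀ := hlip 0 h0 t ht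
  have hmin₀ := hmin 0 h0 t ht
  rw [zero_sub, abs_neg, abs_of_nonneg ht.1] at hlip₀ hmin₀
  exact (abs_min_sub_le_abs_sub ht.2).trans (abs_dist_sub_le_dist hlip₀ hmin₀)
end

section
/- Let X be a metric space, L ≥ 0, and γ : ℝ → X a map with dist(γ s, γ t) ≤ |s − t| for all s, t ∈ [0, L]. Let e, e' ∈ X with dist(e, e') ≤ 1, and suppose both e and e' satisfy the minimality condition: for all s, t ∈ [0, L], |s − t| ≤ dist(γ s, e) + dist(e, γ t) and |s − t| ≤ dist(γ s, e') + dist(e', γ t). Set a = min(dist(e, γ 0), L) and a' = min(dist(e', γ 0), L). Then |a − a'| ≤ dist(e, e') ≤ 1, hence dist(γ a, γ a') ≤ 1, and for every t ∈ [0, L], |a' − t| ≤ dist(e', γ t). That is, a pursuer located at the canonical projection γ a of e can move, in a single move of length at most one, to the canonical projection γ a' of the new evader position e'. -/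
/-- Abstract form of the relocation branch of Lemma 3: when the evader moves
from `e` to `e'` (a distance at most one), the canonical projection parameter
shifts by at most `dist e e' ≤ 1`, so the pursuer can move from the canonical
projection of `e` to that of `e'` in a single legal move, and the new position
is again a projection. -/
theorem projection_relocation {X : Type*} [MetricSpace X] (L : ℝ) (hL : 0 ≤ L)
    (γ : ℝ → X)
    (hlip : ∀ s ∈ Set.Icc (0 : ℝ) L, ∀ t ∈ Set.Icc (0 : ℝ) L, dist (γ s) (γ t) ≤ |s - t|)
    (e e' : X) (hmove : dist e e' ≤ 1)
    (hmin : ∀ s ∈ Set.Icc (0 : ℝ) L, ∀ t ∈ Set.Icc (0 : ℝ) L,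
      |s - t| ≤ dist (γ s) e + dist e (γ t))
    (hmin' : ∀ s ∈ Set.Icc (0 : ℝ) L, ∀ t ∈ Set.Icc (0 : ℝ) L,
      |s - t| ≤ dist (γ s) e' + dist e' (γ t)) :
    |min (dist e (γ 0)) L - min (dist e' (γ 0)) L| ≤ dist e e' ∧
      dist (γ (min (dist e (γ 0)) L)) (γ (min (dist e' (γ 0)) L)) ≤ 1 ∧
      ∀ t ∈ Set.Icc (0 : ℝ) L, |min (dist e' (γ 0)) L - t| ≤ dist e' (γ t) := by
  set a := min (dist e (γ 0)) L with ha
  set a' := min (dist e' (γ 0)) L with ha'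
  have hdd : |dist e (γ 0) - dist e' (γ 0)| ≤ dist e e' := abs_dist_sub_le _ _ _
  have h1 : |a - a'| ≤ dist e e' := by
    have := abs_min_sub_min_le_max (dist e (γ 0)) L (dist e' (γ 0)) L
    simp only [sub_self, abs_zero] at this
    exact le_trans this (by simpa using hdd)
  have hamem : a ∈ Set.Icc (0 : ℝ) L :=
    ⟨le_min dist_nonneg hL, min_le_right _ _⟩
  have hamem' : a' ∈ Set.Icc (0 : ℝ) L :=
    ⟨le_min dist_nonneg hL, min_le_right _ _⟩
  refine ⟨h1, le_trans (le_trans (hlip a hamem a' hamem') h1) hmove, ?_⟩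
  intro t ht
  have h0mem : (0 : ℝ) ∈ Set.Icc (0 : ℝ) L := ⟨le_refl _, hL⟩
  have hdt0 : dist (γ t) (γ 0) ≤ t := by
    have := hlip t ht 0 h0mem
    rwa [sub_zero, abs_of_nonneg ht.1] at this
  rcases le_or_gt (dist e' (γ 0)) L with hle | hlt
  · have ha'eq : a' = dist e' (γ 0) := min_eq_left hle
    rw [ha'eq, abs_sub_le_iff]
    constructor
    · -- dist e' (γ 0) - t ≤ dist e' (γ t)
      have : dist e' (γ 0) ≤ dist e' (γ t) + dist (γ t) (γ 0) := dist_triangle _ _ _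
      linarith
    · -- t - dist e' (γ 0) ≤ dist e' (γ t)
      have := hmin' 0 h0mem t ht
      rw [zero_sub, abs_neg, abs_of_nonneg ht.1, dist_comm (γ 0) e'] at this
      linarith
  · have ha'eq : a' = L := min_eq_right hlt.le
    rw [ha'eq, abs_of_nonneg (by linarith [ht.2]), ]
    have : dist e' (γ 0) ≤ dist e' (γ t) + dist (γ t) (γ 0) := dist_triangle _ _ _
    linarith
end

section
/- Let X be a metric space, L ≥ 0, and γ : ℝ → X a map with dist(γ s, γ t) ≤ |s − t| for all s, t ∈ [0, L]. Suppose a pursuer is located at a projection γ a of the evader position e, i.e. a ∈ [0, L] and |a − t| ≤ dist(e, γ t) for all t ∈ [0, L]. If the evader's move from e to e' crosses the path, in the sense that there exists t₀ ∈ [0, L] with dist(e, γ t₀) + dist(γ t₀, e') ≤ 1, then dist(γ a, e') ≤ 1; that is, the pursuer can capture the evader on its next move. -/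
theorem projection_capture_general {X : Type*} [MetricSpace X] (L : ℝ)
    (γ : ℝ → X)
    (hlip : ∀ s ∈ Set.Icc (0 : ℝ) L, ∀ t ∈ Set.Icc (0 : ℝ) L, dist (γ s) (γ t) ≤ |s - t|)
    (e e' : X) (a : ℝ) (ha : a ∈ Set.Icc (0 : ℝ) L)
    (hproj : ∀ t ∈ Set.Icc (0 : ℝ) L, |a - t| ≤ dist e (γ t))
    (t₀ : ℝ) (ht₀ : t₀ ∈ Set.Icc (0 : ℝ) L)
    (hcross : dist e (γ t₀) + dist (γ t₀) e' ≤ 1) :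
    dist (γ a) e' ≤ 1 :=
  calc dist (γ a) e' ≤ dist (γ a) (γ t₀) + dist (γ t₀) e' := dist_triangle _ _ _
    _ ≤ dist e (γ t₀) + dist (γ t₀) e' := by
      gcongr
      exact (hlip a ha t₀ ht₀).trans (hproj t₀ ht₀)
    _ ≤ 1 := hcross

/-- Abstract form of the capture branch of Lemma 3: if a pursuer stands at a
projection `γ a` of the evader position `e` onto the path, and the evader's
move from `e` to `e'` crosses the path at some point `γ t₀`, then the pursuer
is within distance one of the evader's new position and can capture it. -/
theorem projection_capture {X : Type*} [MetricSpace X] (L : ℝ) (hL : 0 ≤ L)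
    (γ : ℝ → X)
    (hlip : ∀ s ∈ Set.Icc (0 : ℝ) L, ∀ t ∈ Set.Icc (0 : ℝ) L, dist (γ s) (γ t) ≤ |s - t|)
    (e e' : X) (a : ℝ) (ha : a ∈ Set.Icc (0 : ℝ) L)
    (hproj : ∀ t ∈ Set.Icc (0 : ℝ) L, |a - t| ≤ dist e (γ t))
    (t₀ : ℝ) (ht₀ : t₀ ∈ Set.Icc (0 : ℝ) L)
    (hcross : dist e (γ t₀) + dist (γ t₀) e' ≤ 1) :
    dist (γ a) e' ≤ 1 :=
  projection_capture_general L γ hlip e e' a ha hproj t₀ ht₀ hcross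
end

section
/- Let X be a metric space, L ≥ 0, and γ : ℝ → X a map with dist(γ s, γ t) ≤ |s − t| for all s, t ∈ [0, L]. Let e : ℕ → X be an evader trajectory with dist(e n, e (n+1)) ≤ 1 for all n, such that every position e n satisfies the minimality condition: for all s, t ∈ [0, L], |s − t| ≤ dist(γ s, e n) + dist(e n, γ t). Define the pursuer trajectory p n = γ (min(dist(e n, γ 0), L)). Then: (i) for all n, dist(p n, p (n+1)) ≤ 1, so the pursuer's moves are legal; and (ii) for all n, if there exists t₀ ∈ [0, L] with dist(e n, γ t₀) + dist(γ t₀, e (n+1)) ≤ 1 (the evader crosses the path on its move), then dist(p n, e (n+1)) ≤ 1, so the pursuer captures the evader on its next move. -/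
/-!
The pursuer stands at `γ (π x)` where `π x = min (dist x (γ 0)) L`. Since `x ↦ dist x (γ 0)` and
truncation at `L` are `1`-Lipschitz and `γ` is `1`-Lipschitz on `[0, L]`, the pursuer's move is
at most the evader's move. If `x` is minimal for `γ`, then `|π x - t| ≤ dist x (γ t)` for every
`t ∈ [0, L]`: the bound `π x - t ≤ dist x (γ t)` is the triangle inequality through `γ t`, and
`t - π x ≤ dist x (γ t)` is minimality against the endpoint `γ 0`. So when the evader's move
passes through `γ t₀`, the pursuer is within `dist (e n) (γ t₀) + dist (γ t₀) (e (n + 1)) ≤ 1`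
of the evader's new position.
-/

open Set

noncomputable def projParam {X : Type*} [MetricSpace X] (γ : ℝ → X) (L : ℝ) (x : X) : ℝ :=
  min (dist x (γ 0)) L

section

variable {X : Type*} [MetricSpace X] {γ : ℝ → X} {L : ℝ}

theorem projParam_mem_Icc (hL : 0 ≤ L) (x : X) : projParam γ L x ∈ Icc 0 L :=
  ⟨le_min dist_nonneg hL, min_le_right _ _⟩

theorem lipschitzWith_projParam : LipschitzWith 1 (projParam γ L) :=
  (LipschitzWith.dist_left (γ 0)).min_const L

theorem lipschitzWith_comp_projParam (hγ : LipschitzOnWith 1 γ (Icc 0 L)) (hL : 0 ≤ L) :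
    LipschitzWith 1 (γ ∘ projParam γ L) := by
  simpa using hγ.comp (lipschitzWith_projParam.lipschitzOnWith (s := univ))
    (fun x _ => projParam_mem_Icc (γ := γ) hL x)

theorem abs_projParam_sub_le (hγ : LipschitzOnWith 1 γ (Icc 0 L)) {x : X} {t : ℝ}
    (ht : t ∈ Icc 0 L) (hx : t ≤ dist (γ 0) x + dist x (γ t)) :
    |projParam γ L x - t| ≤ dist x (γ t) := by
  have hγt : dist (γ t) (γ 0) ≤ t := by
    simpa [Real.dist_eq, abs_of_nonneg ht.1] using hγ.dist_le_mul t ht 0 ⟨le_rfl, ht.1.trans ht.2⟩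
  have hupper : dist x (γ 0) ≤ dist x (γ t) + t :=
    (dist_triangle x (γ t) (γ 0)).trans (by linarith)
  rw [dist_comm] at hx
  rw [abs_le, projParam]
  refine ⟨?_, by linarith [min_le_left (dist x (γ 0)) L]⟩
  rcases min_choice (dist x (γ 0)) L with h | h <;> rw [h] <;>
    linarith [ht.2, dist_nonneg (x := x) (y := γ t)]

theorem dist_comp_projParam_le (hγ : LipschitzOnWith 1 γ (Icc 0 L)) {x : X} {t : ℝ}
    (ht : t ∈ Icc 0 L) (hx : t ≤ dist (γ 0) x + dist x (γ t)) :
    dist (γ (projParam γ L x)) (γ t) ≤ dist x (γ t) := by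
  have hmem : projParam γ L x ∈ Icc 0 L := projParam_mem_Icc (ht.1.trans ht.2) x
  simpa [Real.dist_eq] using (hγ.dist_le_mul _ hmem t ht).trans (by
    simpa [Real.dist_eq] using abs_projParam_sub_le hγ ht hx)

end

/-- The path-guarding tool (Lemma 3 over an entire pursuit): the pursuer
trajectory `p n = γ (min (dist (e n) (γ 0)) L)`, standing at the canonical
projection of the evader onto a minimal path, consists of legal moves and
guards the path: whenever the evader's move crosses the path, the pursuer is
within distance one of the evader's new position. -/
theorem guard_minimal_path {X : Type*} [MetricSpace X] (L : ℝ) (hL : 0 ≤ L)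
    (γ : ℝ → X)
    (hlip : ∀ s ∈ Set.Icc (0 : ℝ) L, ∀ t ∈ Set.Icc (0 : ℝ) L, dist (γ s) (γ t) ≤ |s - t|)
    (e : ℕ → X) (hmove : ∀ n, dist (e n) (e (n + 1)) ≤ 1)
    (hmin : ∀ n, ∀ s ∈ Set.Icc (0 : ℝ) L, ∀ t ∈ Set.Icc (0 : ℝ) L,
      |s - t| ≤ dist (γ s) (e n) + dist (e n) (γ t))
    (p : ℕ → X) (hp : ∀ n, p n = γ (min (dist (e n) (γ 0)) L)) :
    (∀ n, dist (p n) (p (n + 1)) ≤ 1) ∧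
      (∀ n, (∃ t₀ ∈ Set.Icc (0 : ℝ) L,
          dist (e n) (γ t₀) + dist (γ t₀) (e (n + 1)) ≤ 1) →
        dist (p n) (e (n + 1)) ≤ 1) := by
  have hγ : LipschitzOnWith 1 γ (Icc 0 L) :=
    .mk_one fun s hs t ht => by simpa [Real.dist_eq] using hlip s hs t ht
  have hp' : ∀ n, p n = γ (projParam γ L (e n)) := hp
  refine ⟨fun n => ?_, fun n ⟨t₀, ht₀, hcross⟩ => ?_⟩
  · rw [hp', hp']
    simpa using (lipschitzWith_comp_projParam hγ hL).dist_le_mul_of_le (hmove n)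
  · have hx : t₀ ≤ dist (γ 0) (e n) + dist (e n) (γ t₀) := by
      simpa [abs_of_nonneg ht₀.1] using hmin n 0 ⟨le_rfl, hL⟩ t₀ ht₀
    calc dist (p n) (e (n + 1)) ≤ dist (p n) (γ t₀) + dist (γ t₀) (e (n + 1)) :=
          dist_triangle _ _ _
      _ ≤ dist (e n) (γ t₀) + dist (γ t₀) (e (n + 1)) := by
          rw [hp']; gcongr; exact dist_comp_projParam_le hγ ht₀ hx
      _ ≤ 1 := hcross
end

section
/- Let L ≥ 0 be a real number and let a : ℕ → ℝ be a sequence with a n ∈ [0, L] for all n and |a (n+1) − a n| ≤ 1 for all n. Then there exists a natural number n ≤ ⌈L⌉ such that |a n − n| ≤ 1. (Interpretation: a pursuer that starts at the beginning of a path of length L and advances distance one along it per turn comes within one move of the evader's projection, which shifts by at most one per turn and stays on the path, after at most ⌈L⌉ turns.) -/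
/-! The gap `a n - n` starts at `a 0 ≥ 0`, is at most `0` at time `⌈L⌉`, and decreases by at
most `2` per turn, so it cannot jump over the band `[-1, 1]` of width `2`. -/

theorem exists_le_mem_Icc_of_sub_le_succ {α : Type*} [AddCommGroup α] [LinearOrder α]
    [IsOrderedAddMonoid α] {f : ℕ → α} {lo hi : α} (h0 : lo ≤ f 0)
    (hstep : ∀ n, f n - (hi - lo) ≤ f (n + 1)) :
    ∀ {N : ℕ}, f N ≤ hi → ∃ n ≤ N, f n ∈ Set.Icc lo hi
  | 0, hN => ⟨0, le_rfl, h0, hN⟩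
  | N + 1, hN => by
    by_cases hprev : f N ≤ hi
    · obtain ⟨n, hn, hmem⟩ := exists_le_mem_Icc_of_sub_le_succ h0 hstep hprev
      exact ⟨n, hn.trans N.le_succ, hmem⟩
    · have : lo ≤ f (N + 1) := calc
        lo = hi - (hi - lo) := (sub_sub_cancel hi lo).symm
        _ ≤ f N - (hi - lo) := sub_le_sub_right (le_of_not_ge hprev) _
        _ ≤ f (N + 1) := hstep N
      exact ⟨N + 1, le_rfl, this, hN⟩

theorem initialization_reaches_projection_general (L : ℝ) (a : ℕ → ℝ)
    (hrange : ∀ n, a n ∈ Set.Icc (0 : ℝ) L)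
    (hshift : ∀ n, |a (n + 1) - a n| ≤ 1) :
    ∃ n : ℕ, n ≤ ⌈L⌉₊ ∧ |a n - (n : ℝ)| ≤ 1 := by
  have hstart : (-1 : ℝ) ≤ a 0 - (0 : ℕ) := by
    push_cast
    linarith [(hrange 0).1]
  have hstep (n : ℕ) : a n - n - (1 - -1) ≤ a (n + 1) - (n + 1 : ℕ) := by
    push_cast
    linarith [(abs_le.mp (hshift n)).1]
  have hend : a ⌈L⌉₊ - ⌈L⌉₊ ≤ (1 : ℝ) := by
    linarith [(hrange ⌈L⌉₊).2, Nat.le_ceil L]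
  obtain ⟨n, hn, hmem⟩ := exists_le_mem_Icc_of_sub_le_succ hstart hstep hend
  exact ⟨n, hn, abs_le.mpr hmem⟩

/-- Discrete core of Lemma 4 (initialization): a projection parameter that
stays in `[0, L]` and shifts by at most one per turn is met, within distance
one, by a pursuer advancing at unit speed from parameter `0`, after at most
`⌈L⌉` turns. -/
theorem initialization_reaches_projection (L : ℝ) (hL : 0 ≤ L) (a : ℕ → ℝ)
    (hrange : ∀ n, a n ∈ Set.Icc (0 : ℝ) L)
    (hshift : ∀ n, |a (n + 1) - a n| ≤ 1) :
    ∃ n : ℕ, n ≤ ⌈L⌉₊ ∧ |a n - (n : ℝ)| ≤ 1 :=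
  initialization_reaches_projection_general L a hrange hshift
end

section
/- Let v₁, v₂, v₃, v₄ and p be points of the Euclidean plane ℝ² such that p lies on the segment [v₁, v₂], p lies on the segment [v₃, v₄], and p does NOT lie on the segment [v₁, v₃]. Then dist(v₁, v₃) + dist(v₂, v₄) < dist(v₁, v₂) + dist(v₃, v₄). -/
theorem dist_add_dist_lt_of_dist_add_dist_eq {α : Type*} [PseudoMetricSpace α]
    {v₁ v₂ v₃ v₄ p : α} (h12 : dist v₁ p + dist p v₂ = dist v₁ v₂)
    (h34 : dist v₃ p + dist p v₄ = dist v₃ v₄) (h13 : dist v₁ v₃ < dist v₁ p + dist p v₃) :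
    dist v₁ v₃ + dist v₂ v₄ < dist v₁ v₂ + dist v₃ v₄ :=
  calc dist v₁ v₃ + dist v₂ v₄
      < (dist v₁ p + dist p v₃) + (dist v₂ p + dist p v₄) :=
        add_lt_add_of_lt_of_le h13 (dist_triangle v₂ p v₄)
    _ = (dist v₁ p + dist p v₂) + (dist v₃ p + dist p v₄) := by
        rw [dist_comm p v₃, dist_comm v₂ p]; ring
    _ = dist v₁ v₂ + dist v₃ v₄ := by rw [h12, h34]

/-- Key geometric inequality of Lemma 5: if the segments `[v₁, v₂]` and
`[v₃, v₄]` cross at a point `p` that does not lie on the segment `[v₁, v₃]`,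
then rerouting the crossing strictly shortens the total length. -/
theorem crossing_shortcut (v₁ v₂ v₃ v₄ p : EuclideanSpace ℝ (Fin 2))
    (h12 : p ∈ segment ℝ v₁ v₂) (h34 : p ∈ segment ℝ v₃ v₄)
    (h13 : p ∉ segment ℝ v₁ v₃) :
    dist v₁ v₃ + dist v₂ v₄ < dist v₁ v₂ + dist v₃ v₄ := by
  rw [mem_segment_iff_wbtw, ← dist_add_dist_eq_iff] at h12 h34
  rw [mem_segment_iff_wbtw, ← dist_lt_dist_add_dist_iff] at h13
  exact dist_add_dist_lt_of_dist_add_dist_eq h12 h34 h13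
end

section
/- Let G be a finite simple graph on vertex set V with no cycles of length three or four (girth at least 5) and minimum degree at least k, i.e. every vertex has degree ≥ k. Let v ∈ V be the evader's vertex and let c : ι → V be the positions of fewer than k pursuers (ι a finite index type with |ι| < k) such that v is not in the closed neighborhood of any cᵢ (v ≠ cᵢ and v is not adjacent to cᵢ, for every i). Suppose each pursuer moves to a new position c'ᵢ with c'ᵢ = cᵢ or c'ᵢ adjacent to cᵢ. Then there exists a vertex u adjacent to v such that u is not in the closed neighborhood of any c'ᵢ (u ≠ c'ᵢ and u is not adjacent to c'ᵢ, for every i). -/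
/-!
Since `G` has no triangles or 4-cycles, two distinct neighbors of `v` cannot both lie in the
closed neighborhood of a vertex `w ≠ v`: they would close a cycle of length 3 or 4 through `v`.
No pursuer can have reached `v`, so each of the fewer than `k` pursuers blocks at most one of
the at least `k` neighbors of `v`, and some neighbor stays free.
-/

namespace Finset

theorem exists_mem_forall_notMem_of_card_lt {α ι : Type*} [Fintype ι] {s : Finset α}
    (t : ι → Set α) (ht : ∀ i, (↑s ∩ t i).Subsingleton) (hcard : Fintype.card ι < #s) :
    ∃ a ∈ s, ∀ i, a ∉ t i := by
  by_contra! hcover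
  choose f hf using hcover
  obtain ⟨a, b, hab, hfab⟩ :=
    Fintype.exists_ne_map_eq_of_card_lt (fun a : s ↦ f a a.2) (by simpa using hcard)
  refine hab (Subtype.ext (ht (f b b.2) ⟨a.2, ?_⟩ ⟨b.2, hf b b.2⟩))
  exact hfab ▸ hf a a.2

end Finset

namespace SimpleGraph

variable {V : Type*} {G : SimpleGraph V}

def closedNeighborSet (G : SimpleGraph V) (v : V) : Set V := insert v (G.neighborSet v)

@[simp]
theorem mem_closedNeighborSet {v w : V} : w ∈ G.closedNeighborSet v ↔ w = v ∨ G.Adj v w :=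
  Iff.rfl

theorem Walk.IsCycle.le_length_of_le_girth {n : ℕ} (hn : n ≤ G.girth) {a : V}
    {w : G.Walk a a} (hw : w.IsCycle) : n ≤ w.length :=
  hn.trans (ENat.toNat_le_of_le_natCast (egirth_le_length hw))

variable (hG : 5 ≤ G.girth)
include hG

theorem not_adj_of_five_le_girth {a b c : V} (hab : G.Adj a b) (hbc : G.Adj b c) :
    ¬ G.Adj c a := fun hca ↦ by
  have hcycle : (Walk.cons hab (Walk.cons hbc (Walk.cons hca Walk.nil))).IsCycle := by
    simp [Walk.isCycle_def, Walk.isTrail_def, hab.ne, hbc.ne, hca.ne, hab.ne', hca.ne']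
  simpa using hcycle.le_length_of_le_girth hG

theorem eq_of_four_cycle_of_five_le_girth {a b c d : V} (hab : G.Adj a b) (hbc : G.Adj b c)
    (hcd : G.Adj c d) (hda : G.Adj d a) (hac : a ≠ c) : b = d := by
  by_contra hbd
  have hcycle :
      (Walk.cons hab (Walk.cons hbc (Walk.cons hcd (Walk.cons hda Walk.nil)))).IsCycle := by
    simp [Walk.isCycle_def, Walk.isTrail_def, hab.ne, hbc.ne, hcd.ne, hda.ne, hab.ne', hda.ne',
      hac, hbd]
    aesop
  simpa using hcycle.le_length_of_le_girth hG

theorem subsingleton_neighborSet_inter_closedNeighborSet {v w : V} (hvw : v ≠ w) :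
    (G.neighborSet v ∩ G.closedNeighborSet w).Subsingleton := by
  rintro a ⟨hva, rfl | hwa⟩ b ⟨hvb, rfl | hwb⟩
  · rfl
  · exact (not_adj_of_five_le_girth hG hva hwb hvb.symm).elim
  · exact (not_adj_of_five_le_girth hG hvb hwa hva.symm).elim
  · exact eq_of_four_cycle_of_five_le_girth hG hva hwa.symm hwb hvb.symm hvw

end SimpleGraph

open SimpleGraph

/-- One-step evasion strategy of the lower-bound theorem: in a finite graph of
girth at least 5 and minimum degree at least `k`, if the evader's vertex `v`
is outside the closed neighborhood of every one of fewer than `k` pursuers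
`c i`, and each pursuer moves along at most one edge to `c' i`, then `v` has a
neighbor `u` outside the closed neighborhood of every `c' i`. -/
theorem evader_escape_step {V : Type*} [Fintype V] (G : SimpleGraph V)
    [DecidableRel G.Adj] (hgirth : 5 ≤ G.girth) (k : ℕ)
    (hdeg : ∀ w : V, k ≤ G.degree w)
    {ι : Type*} [Fintype ι] (hcard : Fintype.card ι < k)
    (v : V) (c c' : ι → V)
    (hsafe : ∀ i, v ≠ c i ∧ ¬ G.Adj v (c i))
    (hmove : ∀ i, c' i = c i ∨ G.Adj (c i) (c' i)) :
    ∃ u : V, G.Adj v u ∧ ∀ i, u ≠ c' i ∧ ¬ G.Adj u (c' i) := by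
  have hne : ∀ i, v ≠ c' i := by
    rintro i rfl
    rcases hmove i with h | h
    · exact (hsafe i).1 h
    · exact (hsafe i).2 h.symm
  have hblock i : (↑(G.neighborFinset v) ∩ G.closedNeighborSet (c' i)).Subsingleton := by
    simpa using subsingleton_neighborSet_inter_closedNeighborSet hgirth (hne i)
  obtain ⟨u, hvu, hfree⟩ := Finset.exists_mem_forall_notMem_of_card_lt _ hblock
    (hcard.trans_le (G.card_neighborFinset_eq_degree v ▸ hdeg v))
  refine ⟨u, (G.mem_neighborFinset v u).mp hvu, fun i ↦ ?_⟩
  simpa [not_or, G.adj_comm (c' i)] using hfree i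
end

section
/- Let G be a finite simple graph on a nonempty vertex set V with no cycles of length three or four (girth at least 5) and minimum degree at least k ≥ 1. Then no set of fewer than k vertices dominates G: for every finite set S of vertices with |S| < k, there exists a vertex u such that for every s ∈ S, u ≠ s and u is not adjacent to s. -/
/-!
Pick a vertex `v` outside `S`; it has more than `|S|` neighbours. If every vertex were dominated
by `S`, two distinct neighbours `u, u'` of `v` would be dominated by the same `s ∈ S`, and
`v, u, u', s` would close a cycle of length 3 (if `s ∈ {u, u'}`) or 4 (otherwise), contradicting
girth at least 5.
-/

open Finset

namespace SimpleGraph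

variable {V : Type*} {G : SimpleGraph V}

lemma girth_le_three {a b c : V} (hab : G.Adj a b) (hbc : G.Adj b c) (hca : G.Adj c a) :
    G.girth ≤ 3 := by
  have hcycle : (Walk.cons hab (.cons hbc (.cons hca .nil))).IsCycle := by
    simp [Walk.isCycle_def, Walk.isTrail_def, hab.ne, hbc.ne, hca.ne, hab.ne', hca.ne', Sym2.eq]
  exact girth_le_length hcycle

lemma girth_le_four {a b c d : V} (hab : G.Adj a b) (hbc : G.Adj b c) (hcd : G.Adj c d)
    (hda : G.Adj d a) (hac : a ≠ c) (hbd : b ≠ d) : G.girth ≤ 4 := by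
  have hcycle : (Walk.cons hab (.cons hbc (.cons hcd (.cons hda .nil)))).IsCycle := by
    simp [Walk.isCycle_def, Walk.isTrail_def, hab.ne, hbc.ne, hcd.ne, hda.ne, hab.ne', hda.ne',
      hac, hbd, hac.symm, Sym2.eq]
  exact girth_le_length hcycle

lemma eq_of_adj_of_dominated_of_five_le_girth (hG : 5 ≤ G.girth) {v s u u' : V} (hsv : s ≠ v)
    (hu : G.Adj v u) (hu' : G.Adj v u') (hus : u = s ∨ G.Adj u s) (hu's : u' = s ∨ G.Adj u' s) :
    u = u' := by
  by_contra hne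
  rcases hus with rfl | hus <;> rcases hu's with rfl | hu's
  · exact hne rfl
  · have := girth_le_three hu hu's.symm hu'.symm; omega
  · have := girth_le_three hu hus hu'.symm; omega
  · have := girth_le_four hu hus hu's.symm hu'.symm hsv.symm hne; omega

lemma degree_le_card_of_dominated_of_five_le_girth [Fintype V] [DecidableRel G.Adj]
    (hG : 5 ≤ G.girth) {v : V} {S : Finset V} (hv : v ∉ S)
    (hdom : ∀ u, ∃ s ∈ S, u = s ∨ G.Adj u s) : G.degree v ≤ S.card := by
  choose f hfS hf using hdom
  rw [← card_neighborFinset_eq_degree]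
  refine card_le_card_of_injOn f (fun u _ => hfS u) fun u hu u' hu' hfu => ?_
  rw [coe_neighborFinset, mem_neighborSet] at hu hu'
  exact eq_of_adj_of_dominated_of_five_le_girth hG (ne_of_mem_of_not_mem (hfS u) hv) hu hu' (hf u)
    (hfu ▸ hf u')

end SimpleGraph

open SimpleGraph

theorem no_small_dominating_set_general {V : Type*} [Fintype V] [Nonempty V]
    (G : SimpleGraph V) [DecidableRel G.Adj] (hgirth : 5 ≤ G.girth)
    (k : ℕ) (hdeg : ∀ w : V, k ≤ G.degree w)
    (S : Finset V) (hS : S.card < k) :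
    ∃ u : V, ∀ s ∈ S, u ≠ s ∧ ¬ G.Adj u s := by
  obtain ⟨w⟩ := ‹Nonempty V›
  have hS_lt_univ : S.card < (univ : Finset V).card :=
    hS.trans_le ((hdeg w).trans (G.degree_lt_card_verts w).le)
  obtain ⟨v, -, hv⟩ := exists_mem_notMem_of_card_lt_card hS_lt_univ
  by_contra! hdom
  have hdom' : ∀ u, ∃ s ∈ S, u = s ∨ G.Adj u s := fun u => by
    obtain ⟨s, hs, h⟩ := hdom u
    exact ⟨s, hs, or_iff_not_imp_left.mpr h⟩
  exact (degree_le_card_of_dominated_of_five_le_girth hgirth hv hdom').not_gt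
    (hS.trans_le (hdeg v))

/-- Supporting claim for the lower-bound theorem: in a finite nonempty graph
of girth at least 5 and minimum degree at least `k ≥ 1`, no set of fewer than
`k` vertices dominates the graph: some vertex lies outside all of their
closed neighborhoods. -/
theorem no_small_dominating_set {V : Type*} [Fintype V] [Nonempty V]
    (G : SimpleGraph V) [DecidableRel G.Adj] (hgirth : 5 ≤ G.girth)
    (k : ℕ) (hk : 1 ≤ k) (hdeg : ∀ w : V, k ≤ G.degree w)
    (S : Finset V) (hS : S.card < k) :
    ∃ u : V, ∀ s ∈ S, u ≠ s ∧ ¬ G.Adj u s :=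
  no_small_dominating_set_general G hgirth k hdeg S hS
end
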